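/- arXiv:0803.0890 — 5 statements merged into one kernel-verified Lean document; each statement's English description precedes it below -/
import Mathlib

section
/- Assume X_{i,j} = P_{i,j} = 0 whenever dist(i,j) > R. For all i, j ∈ L and all t ∈ ℝ, writing a_{i,j} = max{0, ⌈(d_{i,j}−1)/2⌉}, one has √‖PX‖ · |C^{xx}_{i,j}(t)| ≤ ‖P‖ · τ^{2a_{i,j}+1} · cosh(τ)/(2a_{i,j}+1)!. -/
/-- The ℓ²→ℓ² operator norm of a real matrix. -/
noncomputable def l2OpNorm {V : Type*} [Fintype V] [DecidableEq V] (M : Matrix V V ℝ) : ℝ :=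
  ‖Matrix.toEuclideanCLM (𝕜 := ℝ) M‖

/-- `C^{xx}_{i,j}(t) = ∑_{n≥0} (−1)^n t^{2n+1} ((PX)^n P)_{i,j}/(2n+1)!`,
which equals `i[x̂_i(t), x̂_j]` for the harmonic Hamiltonian. -/
noncomputable def Cxx {V : Type*} [Fintype V] [DecidableEq V]
    (X P : Matrix V V ℝ) (i j : V) (t : ℝ) : ℝ :=
  ∑' n : ℕ, (-1 : ℝ) ^ n * t ^ (2 * n + 1) * (((P * X) ^ n * P) i j) /
    (Nat.factorial (2 * n + 1))

/-!
The matrix `(PX)ⁿP` only couples sites at graph distance at most `(2n+1)R`, so the first `a`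
terms of the series for `C^{xx}_{i,j}(t)` vanish. Every entry of a matrix is bounded by its
operator norm, so after multiplication by `√‖PX‖` the `n`-th term is at most
`‖P‖ τ^{2n+1}/(2n+1)!`. Since `(2a+1)! (2m)! ≤ (2a+2m+1)!`, the tail `n = a + m` of these bounds
is dominated by `τ^{2a+1}/(2a+1)!` times the series `∑ τ^{2m}/(2m)! = cosh τ`.
-/

open scoped Nat

section Locality

variable {V α : Type*} {G : SimpleGraph V}

def Matrix.HasRange [Zero α] (G : SimpleGraph V) (r : ℕ) (A : Matrix V V α) : Prop :=
  ∀ i j, r < G.dist i j → A i j = 0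

namespace Matrix.HasRange

variable {r r' : ℕ}

theorem mono [Zero α] {A : Matrix V V α} (hA : A.HasRange G r) (h : r ≤ r') :
    A.HasRange G r' :=
  fun i j hij => hA i j (h.trans_lt hij)

variable [Fintype V]

theorem mul [NonUnitalNonAssocSemiring α] (hG : G.Connected) {A B : Matrix V V α}
    (hA : A.HasRange G r) (hB : B.HasRange G r') : (A * B).HasRange G (r + r') := by
  intro i j hij
  rw [Matrix.mul_apply]
  refine Finset.sum_eq_zero fun k _ => ?_
  rcases le_or_gt (G.dist i k) r with hik | hik
  · have := hG.dist_triangle (u := i) (v := k) (w := j)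
    rw [hB k j (by omega), mul_zero]
  · rw [hA i k hik, zero_mul]

theorem pow_mul [DecidableEq V] [Semiring α] (hG : G.Connected) {M A : Matrix V V α}
    (hM : M.HasRange G r) (hA : A.HasRange G r') (n : ℕ) :
    (M ^ n * A).HasRange G (n * r + r') := by
  induction n with
  | zero => simpa using hA
  | succ n ih =>
    rw [pow_succ', Matrix.mul_assoc, show (n + 1) * r + r' = r + (n * r + r') by ring]
    exact hM.mul hG ih

end Matrix.HasRange

end Locality

section OperatorNorm

variable {V : Type*} [Fintype V] [DecidableEq V]

lemma abs_apply_le_l2OpNorm (M : Matrix V V ℝ) (i j : V) : |M i j| ≤ l2OpNorm M := by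
  have h := abs_real_inner_le_norm (EuclideanSpace.single i (1 : ℝ))
    (Matrix.toEuclideanCLM (𝕜 := ℝ) M (EuclideanSpace.single j 1))
  have h' := (Matrix.toEuclideanCLM (𝕜 := ℝ) M).le_opNorm (EuclideanSpace.single j 1)
  rw [Matrix.inner_toEuclideanCLM] at h
  simp only [PiLp.ofLp_single, Matrix.mulVec_single, MulOpposite.op_one, one_smul,
    single_dotProduct, Matrix.col_apply, one_mul, PiLp.norm_single, norm_one, mul_one] at h h'
  exact h.trans h'

lemma l2OpNorm_pow_mul_le (M A : Matrix V V ℝ) (n : ℕ) :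
    l2OpNorm (M ^ n * A) ≤ l2OpNorm M ^ n * l2OpNorm A := by
  induction n with
  | zero => simp
  | succ n ih =>
    unfold l2OpNorm at *
    rw [pow_succ', mul_assoc, map_mul, pow_succ', mul_assoc]
    exact (norm_mul_le _ _).trans (mul_le_mul_of_nonneg_left ih (norm_nonneg _))

end OperatorNorm

lemma pow_add_div_factorial_le {τ : ℝ} (hτ : 0 ≤ τ) (k m : ℕ) :
    τ ^ (k + m) / (k + m)! ≤ τ ^ k / k ! * (τ ^ m / m !) := by
  rw [div_mul_div_comm, ← pow_add]
  refine div_le_div_of_nonneg_left (by positivity) (by positivity) ?_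
  exact_mod_cast
    Nat.le_of_dvd (Nat.factorial_pos _) (Nat.factorial_mul_factorial_dvd_factorial_add k m)

lemma abs_tsum_le_of_sinh_bound {τ K : ℝ} (hτ : 0 ≤ τ) (hK : 0 ≤ K) {a : ℕ} {b : ℕ → ℝ}
    (hzero : ∀ n < a, b n = 0) (hb : ∀ n, |b n| ≤ K * τ ^ (2 * n + 1) / (2 * n + 1)!) :
    |∑' n, b n| ≤ K * τ ^ (2 * a + 1) * Real.cosh τ / (2 * a + 1)! := by
  set C := K * τ ^ (2 * a + 1) / (2 * a + 1)! with hC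
  have hcosh : HasSum (fun m => C * (τ ^ (2 * m) / (2 * m)!)) (C * Real.cosh τ) :=
    (Real.hasSum_cosh τ).mul_left C
  have htail : ∀ m, ‖b (m + a)‖ ≤ C * (τ ^ (2 * m) / (2 * m)!) := fun m => by
    have h := pow_add_div_factorial_le hτ (2 * a + 1) (2 * m)
    rw [show 2 * a + 1 + 2 * m = 2 * (m + a) + 1 by ring] at h
    calc ‖b (m + a)‖ ≤ K * (τ ^ (2 * (m + a) + 1) / (2 * (m + a) + 1)!) := by
          rw [Real.norm_eq_abs, ← mul_div_assoc]; exact hb _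
      _ ≤ K * (τ ^ (2 * a + 1) / (2 * a + 1)! * (τ ^ (2 * m) / (2 * m)!)) := by gcongr
      _ = C * (τ ^ (2 * m) / (2 * m)!) := by rw [hC]; ring
  have hsum : Summable (fun m => b (m + a)) := .of_norm_bounded hcosh.summable htail
  rw [← hsum.sum_add_tsum_nat_add', Finset.sum_eq_zero fun n hn => hzero n (by simpa using hn),
    zero_add, mul_div_right_comm]
  exact tsum_of_norm_bounded hcosh htail

lemma abs_mul_sinh_term_le {s t τ K e : ℝ} (n : ℕ) (hs : 0 ≤ s) (hK : 0 ≤ K)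
    (hsτ : s * |t| ≤ τ) (he : |e| ≤ s ^ (2 * n) * K) :
    |s * ((-1) ^ n * t ^ (2 * n + 1) * e / (2 * n + 1)!)| ≤
      K * τ ^ (2 * n + 1) / (2 * n + 1)! := by
  simp only [abs_mul, abs_div, abs_pow, abs_neg, abs_one, one_pow, one_mul, abs_of_nonneg hs,
    Nat.abs_cast]
  rw [← mul_div_assoc]
  refine div_le_div_of_nonneg_right ?_ (Nat.cast_nonneg _)
  calc s * (|t| ^ (2 * n + 1) * |e|) ≤ s * (|t| ^ (2 * n + 1) * (s ^ (2 * n) * K)) := by gcongr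
    _ = K * (s * |t|) ^ (2 * n + 1) := by ring
    _ ≤ K * τ ^ (2 * n + 1) := by gcongr

lemma mul_lt_of_lt_toNat_ceil {d R n : ℕ}
    (hn : n < (max 0 ⌈((d : ℝ) / R - 1) / 2⌉).toNat) : (2 * n + 1) * R < d := by
  have h : (n : ℝ) < ((d : ℝ) / R - 1) / 2 := Int.lt_ceil.mp (by omega)
  rcases R.eq_zero_or_pos with rfl | hR
  · simp at h; linarith
  · have : (2 * n + 1 : ℝ) * R < d := by
      rw [← lt_div_iff₀ (by exact_mod_cast hR)]; linarith
    exact_mod_cast this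

theorem lieb_robinson_local_xx_general {V : Type*} [Fintype V] [DecidableEq V]
    (G : SimpleGraph V) (hconn : G.Connected) (R : ℕ)
    (X P : Matrix V V ℝ)
    (hXloc : ∀ i j : V, R < G.dist i j → X i j = 0)
    (hPloc : ∀ i j : V, R < G.dist i j → P i j = 0)
    (i j : V) (t : ℝ) :
    let τ : ℝ := max (Real.sqrt (l2OpNorm (P * X))) (Real.sqrt (l2OpNorm (X * P))) * |t|
    let a : ℕ := (max 0 ⌈((G.dist i j : ℝ) / R - 1) / 2⌉).toNat
    Real.sqrt (l2OpNorm (P * X)) * |Cxx X P i j t| ≤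
      l2OpNorm P * τ ^ (2 * a + 1) * Real.cosh τ / (Nat.factorial (2 * a + 1)) := by
  intro τ a
  set s := Real.sqrt (l2OpNorm (P * X))
  have hs : 0 ≤ s := Real.sqrt_nonneg _
  have hsτ : s * |t| ≤ τ := mul_le_mul_of_nonneg_right (le_max_left _ _) (abs_nonneg t)
  have hτ : 0 ≤ τ := (mul_nonneg hs (abs_nonneg t)).trans hsτ
  have hP : 0 ≤ l2OpNorm P := norm_nonneg _
  have hrange (n : ℕ) : ((P * X) ^ n * P).HasRange G ((2 * n + 1) * R) :=
    ((Matrix.HasRange.mul hconn hPloc hXloc).pow_mul hconn hPloc n).mono (le_of_eq (by ring))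
  have hs2 : s ^ 2 = l2OpNorm (P * X) := Real.sq_sqrt (norm_nonneg _)
  have hentry (n : ℕ) : |((P * X) ^ n * P) i j| ≤ s ^ (2 * n) * l2OpNorm P := by
    rw [pow_mul, hs2]
    exact (abs_apply_le_l2OpNorm _ i j).trans (l2OpNorm_pow_mul_le _ _ n)
  rw [← abs_of_nonneg hs, ← abs_mul, Cxx, ← tsum_mul_left]
  refine abs_tsum_le_of_sinh_bound hτ hP (fun n hn => ?_)
    (fun n => abs_mul_sinh_term_le n hs hP hsτ (hentry n))
  rw [hrange n i j (mul_lt_of_lt_toNat_ceil hn)]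
  simp

/-- **Lieb-Robinson bound for local couplings**, `xx` commutator:
`√‖PX‖ · |C^{xx}_{i,j}(t)| ≤ ‖P‖ · τ^{2a+1} · cosh τ / (2a+1)!` with
`a = max{0, ⌈(dist(i,j)/R − 1)/2⌉}` and `τ = max{√‖PX‖, √‖XP‖}·|t|`. -/
theorem lieb_robinson_local_xx {V : Type*} [Fintype V] [DecidableEq V]
    (G : SimpleGraph V) (hconn : G.Connected) (R : ℕ) (hR : 1 ≤ R)
    (X P : Matrix V V ℝ) (hX : X.IsSymm) (hP : P.IsSymm)
    (hXloc : ∀ i j : V, R < G.dist i j → X i j = 0)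
    (hPloc : ∀ i j : V, R < G.dist i j → P i j = 0)
    (i j : V) (t : ℝ) :
    let τ : ℝ := max (Real.sqrt (l2OpNorm (P * X))) (Real.sqrt (l2OpNorm (X * P))) * |t|
    let a : ℕ := (max 0 ⌈((G.dist i j : ℝ) / R - 1) / 2⌉).toNat
    Real.sqrt (l2OpNorm (P * X)) * |Cxx X P i j t| ≤
      l2OpNorm P * τ ^ (2 * a + 1) * Real.cosh τ / (Nat.factorial (2 * a + 1)) :=
  lieb_robinson_local_xx_general G hconn R X P hXloc hPloc i j t
end

section
/- Assume X_{i,j} = P_{i,j} = 0 whenever dist(i,j) > R. For all i, j ∈ L and all t ∈ ℝ, writing b_{i,j} = ⌈d_{i,j}/2⌉, both |C^{xp}_{i,j}(t)| and |C^{px}_{i,j}(t)| are bounded above by τ^{2b_{i,j}} · cosh(τ)/(2b_{i,j})!. -/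
/-- `C^{xp}_{i,j}(t) = −∑_{n≥0} (−1)^n t^{2n} ((PX)^n)_{i,j}/(2n)!`,
which equals `i[x̂_i(t), p̂_j]` for the harmonic Hamiltonian. -/
noncomputable def Cxp {V : Type*} [Fintype V] [DecidableEq V]
    (X P : Matrix V V ℝ) (i j : V) (t : ℝ) : ℝ :=
  -∑' n : ℕ, (-1 : ℝ) ^ n * t ^ (2 * n) * (((P * X) ^ n) i j) / (Nat.factorial (2 * n))

/-- `C^{px}_{i,j}(t) = ∑_{n≥0} (−1)^n t^{2n} ((XP)^n)_{i,j}/(2n)!`,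
which equals `i[p̂_i(t), x̂_j]` for the harmonic Hamiltonian. -/
noncomputable def Cpx {V : Type*} [Fintype V] [DecidableEq V]
    (X P : Matrix V V ℝ) (i j : V) (t : ℝ) : ℝ :=
  ∑' n : ℕ, (-1 : ℝ) ^ n * t ^ (2 * n) * (((X * P) ^ n) i j) / (Nat.factorial (2 * n))

open scoped Nat

section OperatorNorm

variable {V : Type*} [Fintype V] [DecidableEq V]

lemma l2OpNorm_pow_le (M : Matrix V V ℝ) (n : ℕ) : l2OpNorm (M ^ n) ≤ l2OpNorm M ^ n := by
  rcases Nat.eq_zero_or_pos n with rfl | hn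
  · simp only [l2OpNorm, pow_zero, map_one]
    exact ContinuousLinearMap.norm_id_le
  · simpa only [l2OpNorm, map_pow] using norm_pow_le' _ hn

end OperatorNorm

namespace SimpleGraph

variable {V α : Type*} (G : SimpleGraph V)

def IsLocalMatrix [Zero α] (r : ℕ) (A : Matrix V V α) : Prop :=
  ∀ i j, r < G.dist i j → A i j = 0

variable {G}

lemma isLocalMatrix_one [DecidableEq V] [Zero α] [One α] :
    G.IsLocalMatrix 0 (1 : Matrix V V α) :=
  fun i j h => Matrix.one_apply_ne fun hij => by simp [hij] at h

lemma IsLocalMatrix.mul [Fintype V] [NonUnitalNonAssocSemiring α] (hG : G.Connected) {r s : ℕ}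
    {A B : Matrix V V α} (hA : G.IsLocalMatrix r A) (hB : G.IsLocalMatrix s B) :
    G.IsLocalMatrix (r + s) (A * B) := by
  intro i j h
  refine Finset.sum_eq_zero fun k _ => ?_
  change A i k * B k j = 0
  by_cases hik : r < G.dist i k
  · rw [hA i k hik, zero_mul]
  · -- `G.dist` is `0` across components, so the triangle inequality needs `G.Connected`.
    have : s < G.dist k j := by have := hG.dist_triangle (u := i) (v := k) (w := j); omega
    rw [hB k j this, mul_zero]

lemma IsLocalMatrix.pow [Fintype V] [DecidableEq V] [Semiring α] (hG : G.Connected) {r : ℕ}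
    {A : Matrix V V α} (hA : G.IsLocalMatrix r A) (n : ℕ) : G.IsLocalMatrix (n * r) (A ^ n) := by
  induction n with
  | zero => simpa using isLocalMatrix_one
  | succ n ih => simpa [pow_succ, add_mul] using ih.mul hG hA

end SimpleGraph

lemma pow_div_factorial_add_le {x : ℝ} (hx : 0 ≤ x) (m n : ℕ) :
    x ^ (m + n) / (m + n)! ≤ x ^ m / m ! * (x ^ n / n !) := by
  rw [div_mul_div_comm, ← pow_add, ← Nat.cast_mul]
  have hfac : ((m ! * n ! : ℕ) : ℝ) ≤ (m + n)! := mod_cast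
    Nat.le_of_dvd (Nat.factorial_pos _) (Nat.factorial_mul_factorial_dvd_factorial_add m n)
  exact div_le_div_of_nonneg_left (by positivity) (by positivity) hfac

lemma abs_tsum_le_of_le_cosh_terms {f : ℕ → ℝ} {τ : ℝ} (hτ : 0 ≤ τ) {b : ℕ}
    (hzero : ∀ n < b, f n = 0) (hle : ∀ n, |f n| ≤ τ ^ (2 * n) / (2 * n)!) :
    |∑' n, f n| ≤ τ ^ (2 * b) * Real.cosh τ / (2 * b)! := by
  have hcosh : Summable fun n : ℕ => τ ^ (2 * n) / (2 * n)! := (Real.hasSum_cosh τ).summable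
  have habs : Summable fun n => |f n| := hcosh.of_nonneg_of_le (fun _ => abs_nonneg _) hle
  have hhead : ∑ n ∈ Finset.range b, |f n| = 0 :=
    Finset.sum_eq_zero fun n hn => by rw [hzero n (Finset.mem_range.mp hn), abs_zero]
  have htail : ∑' n, |f n| = ∑' m, |f (m + b)| := by
    rw [← habs.sum_add_tsum_nat_add b, hhead, zero_add]
  calc |∑' n, f n| ≤ ∑' n, |f n| := by
        simpa only [Real.norm_eq_abs] using
          norm_tsum_le_tsum_norm (f := f) (by simpa only [Real.norm_eq_abs] using habs)
    _ = ∑' m, |f (m + b)| := htail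
    _ ≤ ∑' m, τ ^ (2 * b) / (2 * b)! * (τ ^ (2 * m) / (2 * m)!) := by
        refine ((summable_nat_add_iff b).2 habs).tsum_le_tsum (fun m => ?_) (hcosh.mul_left _)
        have := pow_div_factorial_add_le hτ (2 * b) (2 * m)
        rw [← mul_add, add_comm b] at this
        exact (hle (m + b)).trans this
    _ = τ ^ (2 * b) * Real.cosh τ / (2 * b)! := by
        rw [tsum_mul_left, (Real.hasSum_cosh τ).tsum_eq, mul_div_right_comm]

section Propagator

variable {V : Type*} [Fintype V] [DecidableEq V]

lemma abs_cosh_series_term_le (A : Matrix V V ℝ) (i j : V) {t τ : ℝ}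
    (hτ : √(l2OpNorm A) * |t| ≤ τ) (n : ℕ) :
    |(-1 : ℝ) ^ n * t ^ (2 * n) * (A ^ n) i j / (2 * n)!| ≤ τ ^ (2 * n) / (2 * n)! := by
  have hA : 0 ≤ l2OpNorm A := norm_nonneg _
  simp only [abs_div, abs_mul, abs_pow, abs_neg, abs_one, one_pow, one_mul, Nat.abs_cast]
  gcongr
  calc |t| ^ (2 * n) * |(A ^ n) i j| ≤ |t| ^ (2 * n) * l2OpNorm A ^ n := by
        gcongr
        exact (abs_apply_le_l2OpNorm _ i j).trans (l2OpNorm_pow_le A n)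
    _ = (√(l2OpNorm A) * |t|) ^ (2 * n) := by
        rw [mul_pow, pow_mul (√_), Real.sq_sqrt hA, mul_comm]
    _ ≤ τ ^ (2 * n) := by gcongr

lemma abs_cosh_series_le (A : Matrix V V ℝ) (i j : V) {t τ : ℝ}
    (hτ : √(l2OpNorm A) * |t| ≤ τ) {b : ℕ} (hzero : ∀ n < b, (A ^ n) i j = 0) :
    |∑' n : ℕ, (-1 : ℝ) ^ n * t ^ (2 * n) * (A ^ n) i j / (2 * n)!| ≤
      τ ^ (2 * b) * Real.cosh τ / (2 * b)! :=
  abs_tsum_le_of_le_cosh_terms ((by positivity : 0 ≤ √(l2OpNorm A) * |t|).trans hτ)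
    (fun n hn => by simp [hzero n hn]) (abs_cosh_series_term_le A i j hτ)

end Propagator

lemma Nat.mul_lt_of_lt_toNat_ceil_div {d r n : ℕ} (h : n < ⌈(d : ℝ) / r⌉.toNat) :
    n * r < d := by
  rcases Nat.eq_zero_or_pos r with rfl | hr
  · simp at h
  · have : (n : ℝ) < d / r := Int.lt_ceil.mp (Int.lt_toNat.mp h)
    exact_mod_cast (lt_div_iff₀ (by positivity)).mp this

theorem lieb_robinson_local_xp_px_general {V : Type*} [Fintype V] [DecidableEq V]
    (G : SimpleGraph V) (hconn : G.Connected) (R : ℕ)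
    (X P : Matrix V V ℝ)
    (hXloc : ∀ i j : V, R < G.dist i j → X i j = 0)
    (hPloc : ∀ i j : V, R < G.dist i j → P i j = 0)
    (i j : V) (t : ℝ) :
    let τ : ℝ := max (Real.sqrt (l2OpNorm (P * X))) (Real.sqrt (l2OpNorm (X * P))) * |t|
    let b : ℕ := (⌈((G.dist i j : ℝ) / R) / 2⌉).toNat
    |Cxp X P i j t| ≤ τ ^ (2 * b) * Real.cosh τ / (Nat.factorial (2 * b)) ∧
    |Cpx X P i j t| ≤ τ ^ (2 * b) * Real.cosh τ / (Nat.factorial (2 * b)) := by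
  intro τ b
  have hX : G.IsLocalMatrix R X := hXloc
  have hP : G.IsLocalMatrix R P := hPloc
  have hfar : ∀ n < b, n * (R + R) < G.dist i j := fun n hn =>
    Nat.mul_lt_of_lt_toNat_ceil_div (by simpa [b, div_div, mul_two] using hn)
  constructor
  · rw [Cxp, abs_neg]
    exact abs_cosh_series_le _ i j (mul_le_mul_of_nonneg_right (le_max_left ..) (abs_nonneg t))
      fun n hn => (hP.mul hconn hX).pow hconn n i j (hfar n hn)
  · rw [Cpx]
    exact abs_cosh_series_le _ i j (mul_le_mul_of_nonneg_right (le_max_right ..) (abs_nonneg t))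
      fun n hn => (hX.mul hconn hP).pow hconn n i j (hfar n hn)

/-- **Lieb-Robinson bound for local couplings**, `xp` and `px` commutators:
both `|C^{xp}_{i,j}(t)|` and `|C^{px}_{i,j}(t)|` are bounded by
`τ^{2b} · cosh τ / (2b)!` with `b = ⌈dist(i,j)/(2R)⌉` and `τ = max{√‖PX‖, √‖XP‖}·|t|`. -/
theorem lieb_robinson_local_xp_px {V : Type*} [Fintype V] [DecidableEq V]
    (G : SimpleGraph V) (hconn : G.Connected) (R : ℕ) (hR : 1 ≤ R)
    (X P : Matrix V V ℝ) (hX : X.IsSymm) (hP : P.IsSymm)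
    (hXloc : ∀ i j : V, R < G.dist i j → X i j = 0)
    (hPloc : ∀ i j : V, R < G.dist i j → P i j = 0)
    (i j : V) (t : ℝ) :
    let τ : ℝ := max (Real.sqrt (l2OpNorm (P * X))) (Real.sqrt (l2OpNorm (X * P))) * |t|
    let b : ℕ := (⌈((G.dist i j : ℝ) / R) / 2⌉).toNat
    |Cxp X P i j t| ≤ τ ^ (2 * b) * Real.cosh τ / (Nat.factorial (2 * b)) ∧
    |Cpx X P i j t| ≤ τ ^ (2 * b) * Real.cosh τ / (Nat.factorial (2 * b)) :=
  lieb_robinson_local_xp_px_general G hconn R X P hXloc hPloc i j t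
end

section
/- Suppose the graph has dimension at most D with constant c_D, let η > D be real, and let M be a real matrix indexed by L with |M_{i,j}| ≤ (1 + dist(i,j))^{−η} for all i, j. Then |(M²)_{i,j}| ≤ a_0 · (1 + dist(i,j))^{−η} for all i, j, where a_0 = c_D · 2^{η+1} · ζ(η + 1 − D). -/
/-- The Riemann zeta function at a real argument, `ζ(s) = ∑_{n≥1} n^{−s}`. -/
noncomputable def zetaReal (s : ℝ) : ℝ := ∑' n : ℕ, ((n : ℝ) + 1) ^ (-s)

lemma zeta_summable {s : ℝ} (hs : 1 < s) : Summable (fun n : ℕ => ((n : ℝ) + 1) ^ (-s)) := by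
  have h := (Real.summable_nat_rpow (p := -s)).2 (by linarith)
  have := (summable_nat_add_iff 1).2 h
  simpa [add_comm] using this

lemma zetaReal_nonneg (s : ℝ) : 0 ≤ zetaReal s :=
  tsum_nonneg (fun n => Real.rpow_nonneg (by positivity) _)

lemma sum_decay_bound {V : Type*} [Fintype V] [DecidableEq V]
    (G : SimpleGraph V) (hconn : G.Connected) (D : ℕ) (hD : 1 ≤ D) (cD : ℝ) (hcD : 1 ≤ cD)
    (hdim : ∀ i : V, ∀ r : ℕ, 1 ≤ r →
      ((Finset.univ.filter (fun k : V => G.dist i k = r)).card : ℝ) ≤ cD * (r : ℝ) ^ (D - 1))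
    (η : ℝ) (hη : (D : ℝ) < η) (i : V) :
    ∑ k : V, (1 + (G.dist i k : ℝ)) ^ (-η) ≤ cD * zetaReal (η + 1 - D) := by
  have hs : 1 < η + 1 - D := by linarith
  have hsum : Summable (fun n : ℕ => ((n : ℝ) + 1) ^ (-(η + 1 - D))) := zeta_summable hs
  have key : ∑ k : V, (1 + (G.dist i k : ℝ)) ^ (-η)
      = ∑ r ∈ Finset.univ.image (G.dist i),
          (Finset.univ.filter (fun k : V => G.dist i k = r)).card • (1 + (r : ℝ)) ^ (-η) := by
    exact Finset.sum_comp (fun r : ℕ => (1 + (r : ℝ)) ^ (-η)) (G.dist i)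
  rw [key]
  have step1 : ∀ r ∈ Finset.univ.image (G.dist i),
      (Finset.univ.filter (fun k : V => G.dist i k = r)).card • (1 + (r : ℝ)) ^ (-η)
        ≤ cD * ((r : ℝ) + 1) ^ (-(η + 1 - D)) := by
    intro r _
    rw [nsmul_eq_mul]
    have h1r : (0:ℝ) < 1 + (r:ℝ) := by positivity
    have hcard : ((Finset.univ.filter (fun k : V => G.dist i k = r)).card : ℝ)
        ≤ cD * (1 + (r : ℝ)) ^ ((D : ℝ) - 1) := by
      rcases Nat.eq_zero_or_pos r with hr | hr
      · subst hr
        have hsub : (Finset.univ.filter (fun k : V => G.dist i k = 0)) ⊆ {i} := by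
          intro k hk
          simp only [Finset.mem_filter, Finset.mem_singleton] at hk ⊢
          exact ((hconn.dist_eq_zero_iff).mp hk.2).symm
        have := Finset.card_le_card hsub
        simp only [Finset.card_singleton] at this
        calc ((Finset.univ.filter (fun k : V => G.dist i k = 0)).card : ℝ) ≤ 1 := by
              exact_mod_cast this
          _ ≤ cD * (1 + ((0:ℕ):ℝ)) ^ ((D : ℝ) - 1) := by
              simp only [Nat.cast_zero, add_zero, Real.one_rpow, mul_one]
              exact hcD
      · have h := hdim i r hr
        refine h.trans ?_
        have h2 : ((r:ℝ)) ^ (D - 1) ≤ (1 + (r:ℝ)) ^ (D - 1) := by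
          apply pow_le_pow_left₀ (by positivity) (by linarith)
        have h3 : (1 + (r:ℝ)) ^ (D - 1) = (1 + (r:ℝ)) ^ ((D:ℝ) - 1) := by
          rw [← Real.rpow_natCast (1 + (r:ℝ)) (D - 1)]
          congr 1
          have : ((D - 1 : ℕ) : ℝ) = (D:ℝ) - 1 := by
            have := Nat.cast_sub hD (R := ℝ); simpa using this
          rw [this]
        have hone : (0:ℝ) ≤ cD := by linarith
        calc cD * (r:ℝ) ^ (D-1) ≤ cD * (1 + (r:ℝ)) ^ (D-1) := by
              apply mul_le_mul_of_nonneg_left h2 hone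
          _ = cD * (1 + (r:ℝ)) ^ ((D:ℝ) - 1) := by rw [h3]
    calc ((Finset.univ.filter (fun k : V => G.dist i k = r)).card : ℝ) * (1 + (r : ℝ)) ^ (-η)
        ≤ cD * (1 + (r : ℝ)) ^ ((D : ℝ) - 1) * (1 + (r : ℝ)) ^ (-η) := by
          apply mul_le_mul_of_nonneg_right hcard (Real.rpow_nonneg (by linarith) _)
      _ = cD * ((r : ℝ) + 1) ^ (-(η + 1 - D)) := by
          rw [mul_assoc, ← Real.rpow_add h1r]
          ring_nf
  calc ∑ r ∈ Finset.univ.image (G.dist i),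
        (Finset.univ.filter (fun k : V => G.dist i k = r)).card • (1 + (r : ℝ)) ^ (-η)
      ≤ ∑ r ∈ Finset.univ.image (G.dist i), cD * ((r : ℝ) + 1) ^ (-(η + 1 - D)) :=
        Finset.sum_le_sum step1
    _ = cD * ∑ r ∈ Finset.univ.image (G.dist i), ((r : ℝ) + 1) ^ (-(η + 1 - D)) := by
        rw [Finset.mul_sum]
    _ ≤ cD * zetaReal (η + 1 - D) := by
        apply mul_le_mul_of_nonneg_left _ (by linarith)
        exact Summable.sum_le_tsum _ (fun n _ => Real.rpow_nonneg (by positivity) _) hsum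

lemma single_decay {η : ℝ} (hη : 0 < η) {a c : ℕ} (h : (1:ℝ) + c ≤ 2 * (1 + a)) :
    (1 + (a:ℝ)) ^ (-η) ≤ 2 ^ η * (1 + (c:ℝ)) ^ (-η) := by
  have hc : (0:ℝ) < 1 + c := by positivity
  have h1 : ((2:ℝ) * (1 + a)) ^ (-η) ≤ (1 + (c:ℝ)) ^ (-η) :=
    Real.rpow_le_rpow_of_nonpos hc h (by linarith)
  have h2 : ((2:ℝ) * (1 + a)) ^ (-η) = 2 ^ (-η) * (1 + (a:ℝ)) ^ (-η) :=
    Real.mul_rpow (by norm_num) (by positivity)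
  have h3 : (2:ℝ) ^ η * (2:ℝ) ^ (-η) = 1 := by
    rw [← Real.rpow_add (by norm_num)]; simp
  calc (1 + (a:ℝ)) ^ (-η) = 2 ^ η * (2 ^ (-η) * (1 + (a:ℝ)) ^ (-η)) := by
        rw [← mul_assoc, h3, one_mul]
    _ ≤ 2 ^ η * (1 + (c:ℝ)) ^ (-η) := by
        rw [← h2]
        exact mul_le_mul_of_nonneg_left h1 (Real.rpow_nonneg (by norm_num) _)

lemma pointwise_decay {η : ℝ} (hη : 0 < η) {a b c : ℕ} (h : c ≤ a + b) :
    (1 + (a:ℝ)) ^ (-η) * (1 + (b:ℝ)) ^ (-η)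
      ≤ 2 ^ η * (1 + (c:ℝ)) ^ (-η) * ((1 + (a:ℝ)) ^ (-η) + (1 + (b:ℝ)) ^ (-η)) := by
  have hA : (0:ℝ) ≤ (1 + (a:ℝ)) ^ (-η) := Real.rpow_nonneg (by positivity) _
  have hB : (0:ℝ) ≤ (1 + (b:ℝ)) ^ (-η) := Real.rpow_nonneg (by positivity) _
  have hc : (0:ℝ) ≤ 2 ^ η * (1 + (c:ℝ)) ^ (-η) := by positivity
  rcases le_total b a with hba | hab
  · have h1 : (1:ℝ) + c ≤ 2 * (1 + a) := by
      have : (c:ℝ) ≤ a + b := by exact_mod_cast h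
      have : (b:ℝ) ≤ a := by exact_mod_cast hba
      linarith
    calc (1 + (a:ℝ)) ^ (-η) * (1 + (b:ℝ)) ^ (-η)
        ≤ (2 ^ η * (1 + (c:ℝ)) ^ (-η)) * (1 + (b:ℝ)) ^ (-η) :=
          mul_le_mul_of_nonneg_right (single_decay hη h1) hB
      _ ≤ 2 ^ η * (1 + (c:ℝ)) ^ (-η) * ((1 + (a:ℝ)) ^ (-η) + (1 + (b:ℝ)) ^ (-η)) := by
          apply mul_le_mul_of_nonneg_left _ hc
          linarith
  · have h1 : (1:ℝ) + c ≤ 2 * (1 + b) := by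
      have : (c:ℝ) ≤ a + b := by exact_mod_cast h
      have : (a:ℝ) ≤ b := by exact_mod_cast hab
      linarith
    calc (1 + (a:ℝ)) ^ (-η) * (1 + (b:ℝ)) ^ (-η)
        ≤ (1 + (a:ℝ)) ^ (-η) * (2 ^ η * (1 + (c:ℝ)) ^ (-η)) :=
          mul_le_mul_of_nonneg_left (single_decay hη h1) hA
      _ ≤ 2 ^ η * (1 + (c:ℝ)) ^ (-η) * ((1 + (a:ℝ)) ^ (-η) + (1 + (b:ℝ)) ^ (-η)) := by
          rw [mul_comm]
          apply mul_le_mul_of_nonneg_left _ hc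
          linarith

/-- **Squares of algebraically decaying couplings.** On a graph of dimension `D` with
constant `c_D`, if `|M_{i,j}| ≤ (1 + dist(i,j))^{−η}` with `η > D`, then
`|(M²)_{i,j}| ≤ a₀ · (1 + dist(i,j))^{−η}` with `a₀ = c_D · 2^{η+1} · ζ(η + 1 − D)`. -/
theorem matrix_sq_decay {V : Type*} [Fintype V] [DecidableEq V]
    (G : SimpleGraph V) (hconn : G.Connected) (D : ℕ) (hD : 1 ≤ D)
    (cD : ℝ) (hcD : 1 ≤ cD)
    (hdim : ∀ i : V, ∀ r : ℕ, 1 ≤ r →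
      ((Finset.univ.filter (fun k : V => G.dist i k = r)).card : ℝ) ≤ cD * (r : ℝ) ^ (D - 1))
    (η : ℝ) (hη : (D : ℝ) < η)
    (M : Matrix V V ℝ)
    (hM : ∀ i j : V, |M i j| ≤ (1 + (G.dist i j : ℝ)) ^ (-η)) (i j : V) :
    |(M * M) i j| ≤
      (cD * (2 : ℝ) ^ (η + 1) * zetaReal (η + 1 - D)) * (1 + (G.dist i j : ℝ)) ^ (-η) := by
  have hη0 : 0 < η := lt_of_le_of_lt (by exact_mod_cast Nat.zero_le D) hη
  have hmul : (M * M) i j = ∑ k : V, M i k * M k j := by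
    simp [Matrix.mul_apply]
  have step1 : |(M * M) i j| ≤ ∑ k : V, (1 + (G.dist i k : ℝ)) ^ (-η) * (1 + (G.dist k j : ℝ)) ^ (-η) := by
    rw [hmul]
    refine (Finset.abs_sum_le_sum_abs _ _).trans (Finset.sum_le_sum fun k _ => ?_)
    rw [abs_mul]
    exact mul_le_mul (hM i k) (hM k j) (abs_nonneg _) (Real.rpow_nonneg (by positivity) _)
  have step2 : ∀ k : V, (1 + (G.dist i k : ℝ)) ^ (-η) * (1 + (G.dist k j : ℝ)) ^ (-η)
      ≤ 2 ^ η * (1 + (G.dist i j : ℝ)) ^ (-η)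
        * ((1 + (G.dist i k : ℝ)) ^ (-η) + (1 + (G.dist k j : ℝ)) ^ (-η)) := fun k =>
    pointwise_decay hη0 (hconn.dist_triangle)
  have hsum1 : ∑ k : V, (1 + (G.dist i k : ℝ)) ^ (-η) ≤ cD * zetaReal (η + 1 - D) :=
    sum_decay_bound G hconn D hD cD hcD hdim η hη i
  have hsum2 : ∑ k : V, (1 + (G.dist k j : ℝ)) ^ (-η) ≤ cD * zetaReal (η + 1 - D) := by
    have := sum_decay_bound G hconn D hD cD hcD hdim η hη j
    simpa [SimpleGraph.dist_comm] using this
  have hc : (0:ℝ) ≤ 2 ^ η * (1 + (G.dist i j : ℝ)) ^ (-η) := by positivity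
  calc |(M * M) i j|
      ≤ ∑ k : V, (1 + (G.dist i k : ℝ)) ^ (-η) * (1 + (G.dist k j : ℝ)) ^ (-η) := step1
    _ ≤ ∑ k : V, 2 ^ η * (1 + (G.dist i j : ℝ)) ^ (-η)
          * ((1 + (G.dist i k : ℝ)) ^ (-η) + (1 + (G.dist k j : ℝ)) ^ (-η)) :=
        Finset.sum_le_sum fun k _ => step2 k
    _ = 2 ^ η * (1 + (G.dist i j : ℝ)) ^ (-η)
          * (∑ k : V, (1 + (G.dist i k : ℝ)) ^ (-η) + ∑ k : V, (1 + (G.dist k j : ℝ)) ^ (-η)) := by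
        rw [← Finset.mul_sum, Finset.sum_add_distrib]
    _ ≤ 2 ^ η * (1 + (G.dist i j : ℝ)) ^ (-η)
          * (cD * zetaReal (η + 1 - D) + cD * zetaReal (η + 1 - D)) := by
        apply mul_le_mul_of_nonneg_left _ hc
        exact add_le_add hsum1 hsum2
    _ = (cD * (2 : ℝ) ^ (η + 1) * zetaReal (η + 1 - D)) * (1 + (G.dist i j : ℝ)) ^ (-η) := by
        rw [Real.rpow_add (by norm_num : (0:ℝ) < 2), Real.rpow_one]
        ring
end

section
/- Suppose the graph has dimension at most D with constant c_D, let η > D and c_0 > 0 be real, and suppose |X_{i,j}| ≤ c_0·(1 + dist(i,j))^{−η} and |P_{i,j}| ≤ c_0·(1 + dist(i,j))^{−η} for all i, j. Then for all i, j ∈ L and all t ∈ ℝ, both |C^{xx}_{i,j}(t)| and |C^{pp}_{i,j}(t)| are bounded above by sinh(τ) / (a_0 · (1 + dist(i,j))^{η}), where a_0 = c_D·2^{η+1}·ζ(η + 1 − D) and τ = a_0·c_0·|t|. -/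
/-- `C^{pp}_{i,j}(t) = ∑_{n≥0} (−1)^n t^{2n+1} ((XP)^n X)_{i,j}/(2n+1)!`,
which equals `i[p̂_i(t), p̂_j]` for the harmonic Hamiltonian. -/
noncomputable def Cpp {V : Type*} [Fintype V] [DecidableEq V]
    (X P : Matrix V V ℝ) (i j : V) (t : ℝ) : ℝ :=
  ∑' n : ℕ, (-1 : ℝ) ^ n * t ^ (2 * n + 1) * (((X * P) ^ n * X) i j) /
    (Nat.factorial (2 * n + 1))

open Finset

lemma summable_zetaReal_terms {s : ℝ} (hs : 1 < s) :
    Summable fun n : ℕ => ((n : ℝ) + 1) ^ (-s) := by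
  simpa using (summable_nat_add_iff 1).2 (Real.summable_nat_rpow.2 (by linarith : -s < -1))

lemma one_le_zetaReal {s : ℝ} (hs : 1 < s) : 1 ≤ zetaReal s := by
  simpa [zetaReal] using (summable_zetaReal_terms hs).le_tsum 0 fun n _ => by positivity

lemma rpow_neg_le_two_rpow_mul_rpow_neg {x y η : ℝ} (hx : 0 < x) (hη : 0 ≤ η) (h : x ≤ 2 * y) :
    y ^ (-η) ≤ 2 ^ η * x ^ (-η) := by
  calc y ^ (-η) ≤ (x / 2) ^ (-η) := Real.rpow_le_rpow_of_nonpos (by positivity) (by linarith)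
        (by linarith)
    _ = 2 ^ η * x ^ (-η) := by
        rw [Real.div_rpow hx.le zero_le_two, Real.rpow_neg zero_le_two, div_inv_eq_mul, mul_comm]

/-- Of two distances adding up to at least `z`, one is at least `z / 2`. -/
lemma rpow_neg_mul_rpow_neg_le {x y z η : ℝ} (hx : 0 ≤ x) (hy : 0 ≤ y) (hη : 0 ≤ η)
    (hz : 0 ≤ z) (hxyz : z ≤ x + y) :
    (1 + x) ^ (-η) * (1 + y) ^ (-η) ≤
      2 ^ η * (1 + z) ^ (-η) * ((1 + x) ^ (-η) + (1 + y) ^ (-η)) := by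
  wlog hle : x ≤ y generalizing x y
  · have := this hy hx (by linarith) (le_of_not_ge hle)
    rwa [mul_comm, add_comm ((1 + x) ^ (-η))]
  have hy' : (1 + y) ^ (-η) ≤ 2 ^ η * (1 + z) ^ (-η) :=
    rpow_neg_le_two_rpow_mul_rpow_neg (by positivity) hη (by linarith)
  calc (1 + x) ^ (-η) * (1 + y) ^ (-η) ≤ (1 + x) ^ (-η) * (2 ^ η * (1 + z) ^ (-η)) := by gcongr
    _ = 2 ^ η * (1 + z) ^ (-η) * (1 + x) ^ (-η) := mul_comm _ _
    _ ≤ 2 ^ η * (1 + z) ^ (-η) * ((1 + x) ^ (-η) + (1 + y) ^ (-η)) := by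
        gcongr
        exact le_add_of_nonneg_right (by positivity)

lemma pow_pred_mul_rpow_neg_le {r : ℝ} (hr : 0 ≤ r) {D : ℕ} (hD : 1 ≤ D) (η : ℝ) :
    r ^ (D - 1) * (1 + r) ^ (-η) ≤ (r + 1) ^ (-(η + 1 - D)) := by
  have hpow : r ^ (D - 1) ≤ (1 + r) ^ ((D : ℝ) - 1) := by
    rw [show (D : ℝ) - 1 = (D - 1 : ℕ) by push_cast [Nat.cast_sub hD]; ring, Real.rpow_natCast]
    exact pow_le_pow_left₀ hr (by linarith) _
  calc r ^ (D - 1) * (1 + r) ^ (-η) ≤ (1 + r) ^ ((D : ℝ) - 1) * (1 + r) ^ (-η) := by gcongr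
    _ = (r + 1) ^ (-(η + 1 - D)) := by
        rw [← Real.rpow_add (by positivity), add_comm r]
        ring_nf

def SimpleGraph.HasDimensionAtMost {V : Type*} [Fintype V] (G : SimpleGraph V) (D : ℕ)
    (cD : ℝ) : Prop :=
  ∀ i : V, ∀ r : ℕ, 1 ≤ r →
    ((Finset.univ.filter (fun k : V => G.dist i k = r)).card : ℝ) ≤ cD * (r : ℝ) ^ (D - 1)

namespace SimpleGraph

variable {V : Type*} [Fintype V] [DecidableEq V] {G : SimpleGraph V} {D : ℕ} {cD η : ℝ}

lemma card_sphere_mul_rpow_neg_le (hconn : G.Connected) (hD : 1 ≤ D) (hcD : 1 ≤ cD)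
    (hdim : G.HasDimensionAtMost D cD) (a : V) (r : ℕ) :
    (#{k | G.dist a k = r} : ℝ) * (1 + (r : ℝ)) ^ (-η) ≤ cD * ((r : ℝ) + 1) ^ (-(η + 1 - D)) := by
  rcases Nat.eq_zero_or_pos r with rfl | hr
  · have hsphere : ({k | G.dist a k = 0} : Finset V) = {a} := by
      ext k
      simp [hconn.dist_eq_zero_iff, eq_comm]
    simpa [hsphere] using hcD
  · calc (#{k | G.dist a k = r} : ℝ) * (1 + (r : ℝ)) ^ (-η)
        ≤ cD * (r : ℝ) ^ (D - 1) * (1 + (r : ℝ)) ^ (-η) := by gcongr; exact hdim a r hr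
      _ ≤ cD * ((r : ℝ) + 1) ^ (-(η + 1 - D)) := by
        rw [mul_assoc]
        exact mul_le_mul_of_nonneg_left (pow_pred_mul_rpow_neg_le r.cast_nonneg hD η)
          (by linarith)

lemma sum_rpow_neg_one_add_dist_le (hconn : G.Connected) (hD : 1 ≤ D) (hcD : 1 ≤ cD)
    (hdim : G.HasDimensionAtMost D cD) (hη : (D : ℝ) < η) (a : V) :
    ∑ k, (1 + (G.dist a k : ℝ)) ^ (-η) ≤ cD * zetaReal (η + 1 - D) := by
  have hs : 1 < η + 1 - D := by linarith
  calc ∑ k, (1 + (G.dist a k : ℝ)) ^ (-η)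
      = ∑ r ∈ univ.image (G.dist a), (#{k | G.dist a k = r} : ℝ) * (1 + (r : ℝ)) ^ (-η) := by
        rw [sum_comp (fun r : ℕ => (1 + (r : ℝ)) ^ (-η)) (G.dist a)]
        simp [nsmul_eq_mul]
    _ ≤ ∑ r ∈ univ.image (G.dist a), cD * ((r : ℝ) + 1) ^ (-(η + 1 - D)) :=
        sum_le_sum fun r _ => card_sphere_mul_rpow_neg_le hconn hD hcD hdim a r
    _ ≤ ∑' r : ℕ, cD * ((r : ℝ) + 1) ^ (-(η + 1 - D)) :=
        ((summable_zetaReal_terms hs).mul_left cD).sum_le_tsum _ fun r _ => by positivity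
    _ = cD * zetaReal (η + 1 - D) := by rw [zetaReal, tsum_mul_left]

lemma sum_rpow_neg_mul_rpow_neg_le (hconn : G.Connected) (hD : 1 ≤ D) (hcD : 1 ≤ cD)
    (hdim : G.HasDimensionAtMost D cD) (hη : (D : ℝ) < η) (a b : V) :
    ∑ k, (1 + (G.dist a k : ℝ)) ^ (-η) * (1 + (G.dist k b : ℝ)) ^ (-η) ≤
      cD * 2 ^ (η + 1) * zetaReal (η + 1 - D) * (1 + (G.dist a b : ℝ)) ^ (-η) := by
  have hη0 : 0 ≤ η := by linarith [(Nat.cast_nonneg D : (0 : ℝ) ≤ D)]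
  have hsum := sum_rpow_neg_one_add_dist_le (η := η) hconn hD hcD hdim hη
  calc ∑ k, (1 + (G.dist a k : ℝ)) ^ (-η) * (1 + (G.dist k b : ℝ)) ^ (-η)
      ≤ ∑ k, 2 ^ η * (1 + (G.dist a b : ℝ)) ^ (-η) *
          ((1 + (G.dist a k : ℝ)) ^ (-η) + (1 + (G.dist b k : ℝ)) ^ (-η)) := by
        refine sum_le_sum fun k _ => ?_
        rw [G.dist_comm (u := b)]
        exact rpow_neg_mul_rpow_neg_le (by positivity) (by positivity) hη0 (by positivity)
          (mod_cast hconn.dist_triangle)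
    _ = 2 ^ η * (1 + (G.dist a b : ℝ)) ^ (-η) *
          (∑ k, (1 + (G.dist a k : ℝ)) ^ (-η) + ∑ k, (1 + (G.dist b k : ℝ)) ^ (-η)) := by
        rw [← mul_sum, sum_add_distrib]
    _ ≤ 2 ^ η * (1 + (G.dist a b : ℝ)) ^ (-η) *
          (cD * zetaReal (η + 1 - D) + cD * zetaReal (η + 1 - D)) := by
        gcongr
        exacts [hsum a, hsum b]
    _ = cD * 2 ^ (η + 1) * zetaReal (η + 1 - D) * (1 + (G.dist a b : ℝ)) ^ (-η) := by
        rw [Real.rpow_add two_pos, Real.rpow_one]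
        ring

end SimpleGraph

namespace Matrix

variable {V : Type*} [Fintype V] {K : V → V → ℝ} {a : ℝ}

lemma abs_mul_apply_le_of_sum_mul_le (hK : ∀ u v, ∑ k, K u k * K k v ≤ a * K u v)
    {A B : Matrix V V ℝ} {α β : ℝ} (hα : 0 ≤ α) (hβ : 0 ≤ β)
    (hA : ∀ u v, |A u v| ≤ α * K u v) (hB : ∀ u v, |B u v| ≤ β * K u v) (u v : V) :
    |(A * B) u v| ≤ α * β * a * K u v := by
  calc |(A * B) u v| ≤ ∑ k, |A u k| * |B k v| := by
        simpa only [mul_apply, abs_mul] using abs_sum_le_sum_abs (fun k => A u k * B k v) univ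
    _ ≤ ∑ k, α * K u k * (β * K k v) :=
        sum_le_sum fun k _ => mul_le_mul (hA u k) (hB k v) (abs_nonneg _)
          ((abs_nonneg _).trans (hA u k))
    _ = α * β * ∑ k, K u k * K k v := by rw [mul_sum]; exact sum_congr rfl fun k _ => by ring
    _ ≤ α * β * a * K u v := by rw [mul_assoc (α * β)]; gcongr; exact hK u v

lemma abs_pow_mul_mul_apply_le [DecidableEq V] (hK : ∀ u v, ∑ k, K u k * K k v ≤ a * K u v)
    (ha : 0 ≤ a) {A B : Matrix V V ℝ} {c : ℝ} (hc : 0 ≤ c)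
    (hA : ∀ u v, |A u v| ≤ c * K u v) (hB : ∀ u v, |B u v| ≤ c * K u v) (n : ℕ) (u v : V) :
    |((A * B) ^ n * A) u v| ≤ a ^ (2 * n) * c ^ (2 * n + 1) * K u v := by
  induction n generalizing u v with
  | zero => simpa using hA u v
  | succ n ih =>
    have hBW := abs_mul_apply_le_of_sum_mul_le hK hc (by positivity) hB ih
    have hABW := abs_mul_apply_le_of_sum_mul_le hK hc (by positivity) hA hBW u v
    rw [pow_succ', mul_assoc, mul_assoc]
    convert hABW using 2
    ring

end Matrix

lemma abs_tsum_odd_series_le_sinh {m : ℕ → ℝ} {C x : ℝ}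
    (hm : ∀ n, |m n| ≤ C * x ^ (2 * n + 1)) (t : ℝ) :
    |∑' n : ℕ, (-1 : ℝ) ^ n * t ^ (2 * n + 1) * m n / (Nat.factorial (2 * n + 1))| ≤
      C * Real.sinh (x * |t|) := by
  set f : ℕ → ℝ := fun n => (-1 : ℝ) ^ n * t ^ (2 * n + 1) * m n / (Nat.factorial (2 * n + 1))
  set g : ℕ → ℝ := fun n => C * ((x * |t|) ^ (2 * n + 1) / (Nat.factorial (2 * n + 1)))
  have hg : HasSum g (C * Real.sinh (x * |t|)) := (Real.hasSum_sinh _).mul_left C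
  have hfg : ∀ n, |f n| ≤ g n := fun n => by
    simp only [f, g, abs_div, abs_mul, abs_pow, abs_neg, abs_one, one_pow, one_mul,
      Nat.abs_cast, mul_pow, ← mul_div_assoc]
    have hmn := mul_le_mul_of_nonneg_left (hm n) (pow_nonneg (abs_nonneg t) (2 * n + 1))
    exact div_le_div_of_nonneg_right (hmn.trans_eq (by ring)) (by positivity)
  have hf : Summable fun n => |f n| := hg.summable.of_nonneg_of_le (fun n => abs_nonneg _) hfg
  calc |∑' n, f n| ≤ ∑' n, |f n| := by
        simpa using norm_tsum_le_tsum_norm (f := f) (by simpa using hf)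
    _ ≤ ∑' n, g n := hf.tsum_le_tsum hfg hg.summable
    _ = C * Real.sinh (x * |t|) := hg.tsum_eq

theorem lieb_robinson_nonlocal_xx_pp_general {V : Type*} [Fintype V] [DecidableEq V]
    (G : SimpleGraph V) (hconn : G.Connected) (D : ℕ) (hD : 1 ≤ D)
    (cD : ℝ) (hcD : 1 ≤ cD)
    (hdim : ∀ i : V, ∀ r : ℕ, 1 ≤ r →
      ((Finset.univ.filter (fun k : V => G.dist i k = r)).card : ℝ) ≤ cD * (r : ℝ) ^ (D - 1))
    (η : ℝ) (hη : (D : ℝ) < η) (c₀ : ℝ) (hc₀ : 0 < c₀)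
    (X P : Matrix V V ℝ)
    (hXdec : ∀ i j : V, |X i j| ≤ c₀ * (1 + (G.dist i j : ℝ)) ^ (-η))
    (hPdec : ∀ i j : V, |P i j| ≤ c₀ * (1 + (G.dist i j : ℝ)) ^ (-η))
    (i j : V) (t : ℝ) :
    let a₀ : ℝ := cD * (2 : ℝ) ^ (η + 1) * zetaReal (η + 1 - D)
    let τ : ℝ := a₀ * c₀ * |t|
    |Cxx X P i j t| ≤ Real.sinh τ / (a₀ * (1 + (G.dist i j : ℝ)) ^ η) ∧
    |Cpp X P i j t| ≤ Real.sinh τ / (a₀ * (1 + (G.dist i j : ℝ)) ^ η) := by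
  intro a₀ τ
  have ha₀ : 0 < a₀ := by
    have := one_le_zetaReal (show 1 < η + 1 - D by linarith)
    positivity
  have hconv := G.sum_rpow_neg_mul_rpow_neg_le hconn hD hcD hdim hη
  have hseries : ∀ A B : Matrix V V ℝ,
      (∀ u v, |A u v| ≤ c₀ * (1 + (G.dist u v : ℝ)) ^ (-η)) →
      (∀ u v, |B u v| ≤ c₀ * (1 + (G.dist u v : ℝ)) ^ (-η)) →
      |∑' n : ℕ, (-1 : ℝ) ^ n * t ^ (2 * n + 1) * (((A * B) ^ n * A) i j) /
        (Nat.factorial (2 * n + 1))| ≤ Real.sinh τ / (a₀ * (1 + (G.dist i j : ℝ)) ^ η) := by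
    intro A B hA hB
    refine (abs_tsum_odd_series_le_sinh (C := (1 + (G.dist i j : ℝ)) ^ (-η) / a₀)
      (x := a₀ * c₀) (fun n => ?_) t).trans_eq ?_
    · refine (Matrix.abs_pow_mul_mul_apply_le hconv ha₀.le hc₀.le hA hB n i j).trans_eq ?_
      field_simp
      ring
    · rw [Real.rpow_neg (by positivity)]
      field_simp
      rfl
  exact ⟨hseries P X hPdec hXdec, hseries X P hXdec hPdec⟩

/-- **Lieb-Robinson bounds for non-local (algebraically decaying) couplings**,
`xx` and `pp` commutators: both are bounded by `sinh(τ)/(a₀·(1 + dist(i,j))^η)` with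
`a₀ = c_D·2^{η+1}·ζ(η + 1 − D)` and `τ = a₀·c₀·|t|`. -/
theorem lieb_robinson_nonlocal_xx_pp {V : Type*} [Fintype V] [DecidableEq V]
    (G : SimpleGraph V) (hconn : G.Connected) (D : ℕ) (hD : 1 ≤ D)
    (cD : ℝ) (hcD : 1 ≤ cD)
    (hdim : ∀ i : V, ∀ r : ℕ, 1 ≤ r →
      ((Finset.univ.filter (fun k : V => G.dist i k = r)).card : ℝ) ≤ cD * (r : ℝ) ^ (D - 1))
    (η : ℝ) (hη : (D : ℝ) < η) (c₀ : ℝ) (hc₀ : 0 < c₀)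
    (X P : Matrix V V ℝ) (hX : X.IsSymm) (hP : P.IsSymm)
    (hXdec : ∀ i j : V, |X i j| ≤ c₀ * (1 + (G.dist i j : ℝ)) ^ (-η))
    (hPdec : ∀ i j : V, |P i j| ≤ c₀ * (1 + (G.dist i j : ℝ)) ^ (-η))
    (i j : V) (t : ℝ) :
    let a₀ : ℝ := cD * (2 : ℝ) ^ (η + 1) * zetaReal (η + 1 - D)
    let τ : ℝ := a₀ * c₀ * |t|
    |Cxx X P i j t| ≤ Real.sinh τ / (a₀ * (1 + (G.dist i j : ℝ)) ^ η) ∧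
    |Cpp X P i j t| ≤ Real.sinh τ / (a₀ * (1 + (G.dist i j : ℝ)) ^ η) :=
  lieb_robinson_nonlocal_xx_pp_general G hconn D hD cD hcD hdim η hη c₀ hc₀ X P hXdec hPdec i j t
end

section
/- Suppose the graph has dimension at most D with constant c_D. Let Ξ and Ξ′ be disjoint nonempty subsets of L, write dist(Ξ,Ξ′) = min{dist(i,j) : i ∈ Ξ, j ∈ Ξ′}, and let f : ℕ → [0,∞) be any nonnegative function. Then ∑_{i∈Ξ} ∑_{j∈Ξ′} f(dist(i,j)) ≤ c_D · min{|∂Ξ|, |∂Ξ′|} · ∑_{d = dist(Ξ,Ξ′)}^{d_max} f(d) · d^{D−1} · (1 + c_D·(d − dist(Ξ,Ξ′))^{D}), where d_max = max{dist(i,j) : i ∈ Ξ, j ∈ Ξ′}. -/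
/-!
Group the pairs `(i, j) ∈ Ξ × Ξ'` by their distance `d`. A geodesic from `j ∈ Ξ'` to `i ∈ Ξ`
leaves `Ξ'` through a boundary site `b` with `dist j b + dist b i ≤ d`; since
`dist b i ≥ dist(Ξ, Ξ')`, the site `j` lies in the ball of radius `d - dist(Ξ, Ξ')` around
a point of `∂Ξ'`. Summing sphere sizes, such a ball has at most `1 + c_D (d - dist(Ξ, Ξ'))^D`
points, and each such `j` has at most `c_D d^(D-1)` partners `i` at distance `d`. This bounds
the sum by `|∂Ξ'|`; exchanging the roles of `Ξ` and `Ξ'` bounds it by `|∂Ξ|`.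
-/

def graphBoundary {V : Type*} [Fintype V] [DecidableEq V]
    (G : SimpleGraph V) [DecidableRel G.Adj] (A : Finset V) : Finset V :=
  A.filter fun i => ∃ j, j ∉ A ∧ G.Adj i j

open Finset

namespace SimpleGraph

variable {V : Type*} [Fintype V] [DecidableEq V] {G : SimpleGraph V}

theorem Walk.exists_mem_graphBoundary_dist_add_dist_le [DecidableRel G.Adj] {A : Finset V}
    {u v : V} (p : G.Walk u v) (hu : u ∈ A) (hv : v ∉ A) :
    ∃ b ∈ graphBoundary G A, G.dist u b + G.dist b v ≤ p.length := by
  obtain ⟨e, he, heA, heA'⟩ := p.exists_boundary_dart (A : Set V) hu hv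
  have hsupp := p.dart_fst_mem_support_of_mem_darts he
  refine ⟨e.fst, mem_filter.2 ⟨heA, e.snd, heA', e.adj⟩, ?_⟩
  calc G.dist u e.fst + G.dist e.fst v
      ≤ (p.takeUntil _ hsupp).length + (p.dropUntil _ hsupp).length :=
        add_le_add (dist_le _) (dist_le _)
    _ = p.length := by rw [← Walk.length_append, Walk.take_spec]

theorem Reachable.exists_mem_graphBoundary_dist_add_dist_le [DecidableRel G.Adj]
    {A : Finset V} {u v : V} (h : G.Reachable u v) (hu : u ∈ A) (hv : v ∉ A) :
    ∃ b ∈ graphBoundary G A, G.dist u b + G.dist b v ≤ G.dist u v := by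
  obtain ⟨p, hp⟩ := h.exists_walk_length_eq_dist
  exact hp ▸ p.exists_mem_graphBoundary_dist_add_dist_le hu hv

theorem Connected.card_filter_dist_le_le {D : ℕ} {cD : ℝ} (hconn : G.Connected) (hD : 1 ≤ D)
    (hcD : 0 ≤ cD) {b : V}
    (hsphere : ∀ r : ℕ, 1 ≤ r → (#{k | G.dist b k = r} : ℝ) ≤ cD * r ^ (D - 1)) (R : ℕ) :
    (#{k | G.dist b k ≤ R} : ℝ) ≤ 1 + cD * R ^ D := by
  have hcenter : #{k | G.dist b k = 0} ≤ 1 :=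
    card_le_one.2 fun k hk l hl => by
      simp only [mem_filter, mem_univ, true_and, hconn.dist_eq_zero_iff] at hk hl
      rw [← hk, ← hl]
  have hshell : ∀ r ∈ range R, (#{k | G.dist b k = r + 1} : ℝ) ≤ cD * R ^ (D - 1) :=
    fun r hr => (hsphere (r + 1) r.succ_pos).trans <| by
      gcongr
      exact_mod_cast mem_range.1 hr
  have hmaps : (({k | G.dist b k ≤ R} : Finset V) : Set V).MapsTo (G.dist b) (range (R + 1)) :=
    fun k hk => by simpa [Nat.lt_succ_iff] using hk
  have hcount : #{k | G.dist b k ≤ R} ≤ ∑ r ∈ range (R + 1), #{k | G.dist b k = r} :=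
    (card_eq_sum_card_fiberwise hmaps).le.trans <|
      sum_le_sum fun r _ => card_le_card <| filter_subset_filter _ (subset_univ _)
  calc (#{k | G.dist b k ≤ R} : ℝ)
      ≤ ∑ r ∈ range R, (#{k | G.dist b k = r + 1} : ℝ) + #{k | G.dist b k = 0} := by
        rw [← sum_range_succ' (fun r => (#{k | G.dist b k = r} : ℝ))]
        exact_mod_cast hcount
    _ ≤ ∑ _r ∈ range R, cD * R ^ (D - 1) + 1 := by
        gcongr with r hr
        exacts [hshell r hr, by exact_mod_cast hcenter]
    _ = 1 + cD * R ^ D := by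
        rw [sum_const, card_range, nsmul_eq_mul, ← mul_pow_sub_one (by omega : D ≠ 0) (R : ℝ)]
        ring

theorem Connected.card_filter_product_dist_eq_le [DecidableRel G.Adj] {D : ℕ} {cD : ℝ}
    (hconn : G.Connected) (hD : 1 ≤ D) (hcD : 0 ≤ cD)
    (hdim : ∀ i : V, ∀ r : ℕ, 1 ≤ r → (#{k | G.dist i k = r} : ℝ) ≤ cD * r ^ (D - 1))
    {Ξ Ξ' : Finset V} (hdisj : Disjoint Ξ Ξ') {d₀ : ℕ}
    (hmin : ∀ i ∈ Ξ, ∀ j ∈ Ξ', d₀ ≤ G.dist i j) {d : ℕ} (hd : 1 ≤ d) :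
    (#{p ∈ Ξ ×ˢ Ξ' | G.dist p.1 p.2 = d} : ℝ) ≤
      #(graphBoundary G Ξ') * (1 + cD * ((d - d₀ : ℕ) : ℝ) ^ D) * (cD * d ^ (D - 1)) := by
  set N := (graphBoundary G Ξ').biUnion fun b => {k | G.dist b k ≤ d - d₀}
  have hmaps : (({p ∈ Ξ ×ˢ Ξ' | G.dist p.1 p.2 = d} : Finset (V × V)) : Set (V × V)).MapsTo
      Prod.snd N := by
    rintro ⟨i, j⟩ hp
    simp only [mem_coe, mem_filter, mem_product] at hp
    obtain ⟨⟨hi, hj⟩, hij⟩ := hp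
    obtain ⟨b, hb, hjbi⟩ := (hconn j i).exists_mem_graphBoundary_dist_add_dist_le hj
      (Finset.disjoint_left.1 hdisj hi)
    have := hmin i hi b (mem_filter.1 hb).1
    rw [dist_comm] at hij this
    simp only [N, coe_biUnion, Set.mem_iUnion, mem_univ, true_and, mem_coe, mem_filter]
    exact ⟨b, hb, by rw [dist_comm]; omega⟩
  have hfiber : ∀ j, (#{p ∈ {p ∈ Ξ ×ˢ Ξ' | G.dist p.1 p.2 = d} | p.2 = j} : ℝ) ≤
      cD * d ^ (D - 1) := by
    intro j
    refine le_trans ?_ (hdim j d hd)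
    refine Nat.cast_le.2 (card_le_card_of_injOn Prod.fst ?_ ?_)
    · rintro ⟨i, j'⟩ hp
      simp only [mem_coe, mem_filter, mem_product] at hp
      obtain ⟨⟨-, hij⟩, rfl⟩ := hp
      simpa [dist_comm] using hij
    · rintro ⟨i, j'⟩ hp ⟨i', j''⟩ hp' (rfl : i = i')
      simp only [mem_coe, mem_filter] at hp hp'
      rw [hp.2, hp'.2]
  have hN : (#N : ℝ) ≤ #(graphBoundary G Ξ') * (1 + cD * ((d - d₀ : ℕ) : ℝ) ^ D) := by
    calc (#N : ℝ) ≤ ∑ b ∈ graphBoundary G Ξ', (#{k | G.dist b k ≤ d - d₀} : ℝ) := by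
          exact_mod_cast card_biUnion_le
      _ ≤ ∑ _b ∈ graphBoundary G Ξ', (1 + cD * ((d - d₀ : ℕ) : ℝ) ^ D) :=
          sum_le_sum fun b _ => hconn.card_filter_dist_le_le hD hcD (hdim b) _
      _ = _ := by rw [sum_const, nsmul_eq_mul]
  calc (#{p ∈ Ξ ×ˢ Ξ' | G.dist p.1 p.2 = d} : ℝ)
      = ∑ j ∈ N, (#{p ∈ {p ∈ Ξ ×ˢ Ξ' | G.dist p.1 p.2 = d} | p.2 = j} : ℝ) := by
        exact_mod_cast card_eq_sum_card_fiberwise hmaps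
    _ ≤ ∑ _j ∈ N, cD * d ^ (D - 1) := sum_le_sum fun j _ => hfiber j
    _ = #N * (cD * d ^ (D - 1)) := by rw [sum_const, nsmul_eq_mul]
    _ ≤ _ := by gcongr

theorem Connected.sum_sum_le_card_graphBoundary [DecidableRel G.Adj] {D : ℕ} {cD : ℝ}
    (hconn : G.Connected) (hD : 1 ≤ D) (hcD : 0 ≤ cD)
    (hdim : ∀ i : V, ∀ r : ℕ, 1 ≤ r → (#{k | G.dist i k = r} : ℝ) ≤ cD * r ^ (D - 1))
    {Ξ Ξ' : Finset V} (hdisj : Disjoint Ξ Ξ') {f : ℕ → ℝ} (hf : ∀ d, 0 ≤ f d) {d₀ M : ℕ}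
    (hd₀ : 1 ≤ d₀) (hmin : ∀ i ∈ Ξ, ∀ j ∈ Ξ', d₀ ≤ G.dist i j)
    (hmax : ∀ i ∈ Ξ, ∀ j ∈ Ξ', G.dist i j ≤ M) :
    ∑ i ∈ Ξ, ∑ j ∈ Ξ', f (G.dist i j) ≤
      cD * #(graphBoundary G Ξ') *
        ∑ d ∈ Icc d₀ M, f d * d ^ (D - 1) * (1 + cD * ((d - d₀ : ℕ) : ℝ) ^ D) := by
  have hmaps : ((Ξ ×ˢ Ξ' : Finset (V × V)) : Set (V × V)).MapsTo
      (fun p => G.dist p.1 p.2) (Icc d₀ M) := fun p hp => by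
    rw [mem_coe, mem_product] at hp
    exact mem_Icc.2 ⟨hmin _ hp.1 _ hp.2, hmax _ hp.1 _ hp.2⟩
  calc ∑ i ∈ Ξ, ∑ j ∈ Ξ', f (G.dist i j)
      = ∑ d ∈ Icc d₀ M, #{p ∈ Ξ ×ˢ Ξ' | G.dist p.1 p.2 = d} * f d := by
        rw [← sum_product', ← sum_fiberwise_of_maps_to hmaps]
        refine sum_congr rfl fun d _ => ?_
        rw [sum_congr rfl fun p hp => by rw [(mem_filter.1 hp).2], sum_const, nsmul_eq_mul]
    _ ≤ ∑ d ∈ Icc d₀ M, #(graphBoundary G Ξ') * (1 + cD * ((d - d₀ : ℕ) : ℝ) ^ D) *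
          (cD * d ^ (D - 1)) * f d := by
        gcongr with d hd
        · exact hf d
        · exact hconn.card_filter_product_dist_eq_le hD hcD hdim hdisj hmin
            (hd₀.trans (mem_Icc.1 hd).1)
    _ = _ := by
        rw [mul_sum]
        exact sum_congr rfl fun d _ => by ring

end SimpleGraph

open SimpleGraph

/-- **Surface-resolved summation bound.** On a graph of dimension `D` with constant
`c_D`, for disjoint nonempty `Ξ`, `Ξ′` and any nonnegative `f : ℕ → ℝ`,
`∑_{i∈Ξ} ∑_{j∈Ξ′} f(dist(i,j)) ≤ c_D · min{|∂Ξ|, |∂Ξ′|} ·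
∑_{d=dist(Ξ,Ξ′)}^{d_max} f(d)·d^{D−1}·(1 + c_D·(d − dist(Ξ,Ξ′))^D)`, where
`dist(Ξ,Ξ′)` and `d_max` are the minimal and maximal distance between the two sets. -/
theorem sum_over_sets_le_boundary {V : Type*} [Fintype V] [DecidableEq V]
    (G : SimpleGraph V) [DecidableRel G.Adj] (hconn : G.Connected)
    (D : ℕ) (hD : 1 ≤ D) (cD : ℝ) (hcD : 1 ≤ cD)
    (hdim : ∀ i : V, ∀ r : ℕ, 1 ≤ r →
      ((Finset.univ.filter (fun k : V => G.dist i k = r)).card : ℝ) ≤ cD * (r : ℝ) ^ (D - 1))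
    (Ξ Ξ' : Finset V) (hΞ : Ξ.Nonempty) (hΞ' : Ξ'.Nonempty) (hdisj : Disjoint Ξ Ξ')
    (f : ℕ → ℝ) (hf : ∀ d : ℕ, 0 ≤ f d) :
    (∑ i ∈ Ξ, ∑ j ∈ Ξ', f (G.dist i j)) ≤
      cD * (min (graphBoundary G Ξ).card (graphBoundary G Ξ').card : ℝ) *
        ∑ d ∈ Finset.Icc
            ((Ξ ×ˢ Ξ').inf' (hΞ.product hΞ') fun p => G.dist p.1 p.2)
            ((Ξ ×ˢ Ξ').sup' (hΞ.product hΞ') fun p => G.dist p.1 p.2),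
          f d * (d : ℝ) ^ (D - 1) *
            (1 + cD *
              ((d - (Ξ ×ˢ Ξ').inf' (hΞ.product hΞ') fun p => G.dist p.1 p.2 : ℕ) : ℝ) ^ D) := by
  set d₀ := (Ξ ×ˢ Ξ').inf' (hΞ.product hΞ') fun p => G.dist p.1 p.2
  set M := (Ξ ×ˢ Ξ').sup' (hΞ.product hΞ') fun p => G.dist p.1 p.2
  have hmin : ∀ i ∈ Ξ, ∀ j ∈ Ξ', d₀ ≤ G.dist i j := fun i hi j hj =>
    inf'_le (fun p : V × V => G.dist p.1 p.2) (mk_mem_product hi hj)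
  have hmax : ∀ i ∈ Ξ, ∀ j ∈ Ξ', G.dist i j ≤ M := fun i hi j hj =>
    le_sup' (fun p : V × V => G.dist p.1 p.2) (mk_mem_product hi hj)
  have hd₀ : 1 ≤ d₀ := le_inf' _ _ fun p hp => hconn.pos_dist_of_ne fun h =>
    Finset.disjoint_left.1 hdisj (mem_product.1 hp).1 (h ▸ (mem_product.1 hp).2)
  have hcD₀ : 0 ≤ cD := zero_le_one.trans hcD
  have hsum_nonneg : 0 ≤ ∑ d ∈ Icc d₀ M, f d * (d : ℝ) ^ (D - 1) *
      (1 + cD * ((d - d₀ : ℕ) : ℝ) ^ D) :=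
    sum_nonneg fun d _ => by have := hf d; positivity
  rw [mul_min_of_nonneg _ _ hcD₀, min_mul_of_nonneg _ _ hsum_nonneg]
  refine le_min ?_ (hconn.sum_sum_le_card_graphBoundary hD hcD₀ hdim hdisj hf hd₀ hmin hmax)
  rw [sum_comm]
  simp only [dist_comm (G := G)]
  exact hconn.sum_sum_le_card_graphBoundary hD hcD₀ hdim hdisj.symm hf hd₀
    (fun j hj i hi => dist_comm ▸ hmin i hi j hj) (fun j hj i hi => dist_comm ▸ hmax i hi j hj)
end
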